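/- Let ⊕ be a sum of open sets in ℝ^d satisfying the six requirements exactly, and such that A ⊕ B is bulky for all bounded open A, B. If b₁, …, b_n ⊆ ℝ^d are pairwise disjoint bounded open sets, then b₁ ⊕ ⋯ ⊕ b_n = bulk(b₁ ∪ ⋯ ∪ b_n). -/

import Mathlib

open MeasureTheory Metric Bornology

/-- Points of `ℝ^d`. -/
abbrev Pt (d : ℕ) := EuclideanSpace ℝ (Fin d)

/-- A cubic isometry: a linear isometry of ℝ^d mapping the cube [−1,1]^d to itself. -/
def CubicIsometry {d : ℕ} (U : Pt d ≃ₗᵢ[ℝ] Pt d) : Prop :=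
  ⇑U '' {y : Pt d | ∀ i, |y i| ≤ 1} = {y : Pt d | ∀ i, |y i| ≤ 1}

/-- A bounded open set. -/
def GoodSet {d : ℕ} (A : Set (Pt d)) : Prop := IsOpen A ∧ Bornology.IsBounded A

/-- A sum of open sets satisfying the six requirements exactly: it sends bounded open
sets to open sets and is monotone, commutative, associative (when the intermediate sums
are bounded), translation invariant, invariant under cubic isometries, and conserves
Lebesgue measure. -/
structure SumAxioms (d : ℕ) (Φ : Set (Pt d) → Set (Pt d) → Set (Pt d)) : Prop where
  isOpen : ∀ A B, GoodSet A → GoodSet B → IsOpen (Φ A B)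
  subset_sum : ∀ A B, GoodSet A → GoodSet B → A ⊆ Φ A B
  mono : ∀ A B C, GoodSet A → GoodSet B → GoodSet C → A ⊆ B → Φ A C ⊆ Φ B C
  comm : ∀ A B, GoodSet A → GoodSet B → Φ A B = Φ B A
  assoc : ∀ A B C, GoodSet A → GoodSet B → GoodSet C →
      Bornology.IsBounded (Φ A B) → Bornology.IsBounded (Φ B C) →
      Φ (Φ A B) C = Φ A (Φ B C)
  translate : ∀ (A B : Set (Pt d)) (x : Pt d), GoodSet A → GoodSet B →
      Φ ((· + x) '' A) ((· + x) '' B) = (· + x) '' (Φ A B)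
  rotate : ∀ (A B : Set (Pt d)) (U : Pt d ≃ₗᵢ[ℝ] Pt d), CubicIsometry U →
      GoodSet A → GoodSet B → Φ (⇑U '' A) (⇑U '' B) = ⇑U '' (Φ A B)
  conserve : ∀ A B, GoodSet A → GoodSet B → volume (Φ A B) = volume A + volume B

/-- An open set is *bulky* if it contains every open set essentially equal to it
(i.e. whose symmetric difference with it has Lebesgue measure zero). -/
def Bulky {d : ℕ} (U : Set (Pt d)) : Prop :=
  IsOpen U ∧ ∀ V : Set (Pt d), IsOpen V → volume (symmDiff V U) = 0 → V ⊆ U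

/-- `bulk A` is the bulky open set essentially equal to an open set `A`: the union of all
open sets essentially contained in `A`. -/
def bulk {d : ℕ} (A : Set (Pt d)) : Set (Pt d) :=
  ⋃₀ {B : Set (Pt d) | IsOpen B ∧ volume (B \ A) = 0}

/-- The left-associated iterated sum `b 0 ⊕ b 1 ⊕ ⋯ ⊕ b n`. -/
def iterSum {d : ℕ} (Φ : Set (Pt d) → Set (Pt d) → Set (Pt d)) :
    (n : ℕ) → (Fin (n + 1) → Set (Pt d)) → Set (Pt d)
  | 0, b => b 0
  | n + 1, b => Φ (iterSum Φ n fun i => b i.castSucc) (b (Fin.last (n + 1)))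


lemma bulk_isOpen {d : ℕ} (A : Set (Pt d)) : IsOpen (bulk A) :=
  isOpen_sUnion fun _ hB => hB.1

lemma subset_bulk {d : ℕ} {A : Set (Pt d)} (hA : IsOpen A) : A ⊆ bulk A :=
  Set.subset_sUnion_of_mem ⟨hA, by simp⟩

lemma volume_bulk_diff {d : ℕ} (A : Set (Pt d)) : volume (bulk A \ A) = 0 := by
  obtain ⟨T, hTc, hTsub, hTeq⟩ :=
    TopologicalSpace.isOpen_sUnion_countable {B : Set (Pt d) | IsOpen B ∧ volume (B \ A) = 0}
      (fun _ hB => hB.1)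
  have h0 : volume (⋃ B ∈ T, B \ A) = 0 :=
    (measure_biUnion_null_iff hTc).mpr fun B hB => (hTsub hB).2
  refine measure_mono_null ?_ h0
  rw [bulk, ← hTeq]
  intro x hx
  obtain ⟨⟨B, hB, hxB⟩, hxA⟩ := hx
  exact Set.mem_biUnion hB ⟨hxB, hxA⟩

lemma open_null_empty {d : ℕ} {U : Set (Pt d)} (hU : IsOpen U) (h : volume U = 0) : U = ∅ :=
  (hU.measure_eq_zero_iff volume).mp h

lemma bulk_subset_closure {d : ℕ} (A : Set (Pt d)) : bulk A ⊆ closure A := by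
  rw [← Set.diff_eq_empty]
  refine open_null_empty ((bulk_isOpen A).sdiff isClosed_closure) ?_
  refine measure_mono_null ?_ (volume_bulk_diff A)
  exact Set.diff_subset_diff_right subset_closure

lemma goodSet_bulk {d : ℕ} {A : Set (Pt d)} (hA : GoodSet A) : GoodSet (bulk A) :=
  ⟨bulk_isOpen A, hA.2.closure.subset (bulk_subset_closure A)⟩

lemma bulk_mono_null {d : ℕ} {A A' : Set (Pt d)} (h : volume (A \ A') = 0) :
    bulk A ⊆ bulk A' := by
  refine Set.sUnion_subset_sUnion ?_
  rintro B ⟨hB, hBA⟩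
  refine ⟨hB, measure_mono_null ?_ (measure_union_null hBA h)⟩
  intro x hx
  by_cases hxA : x ∈ A
  · exact Or.inr ⟨hxA, hx.2⟩
  · exact Or.inl ⟨hx.1, hxA⟩

lemma bulk_congr {d : ℕ} {A A' : Set (Pt d)} (h : volume (A \ A') = 0)
    (h' : volume (A' \ A) = 0) : bulk A = bulk A' :=
  subset_antisymm (bulk_mono_null h) (bulk_mono_null h')

/-- Binary case: for disjoint bounded open sets, `Φ A B = bulk (A ∪ B)`. -/
lemma sum_eq_bulk {d : ℕ} {Φ : Set (Pt d) → Set (Pt d) → Set (Pt d)}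
    (hax : SumAxioms d Φ)
    (hbulky : ∀ A B, GoodSet A → GoodSet B → Bulky (Φ A B))
    {A B : Set (Pt d)} (hA : GoodSet A) (hB : GoodSet B) (hAB : Disjoint A B) :
    Φ A B = bulk (A ∪ B) := by
  have hUsub : A ∪ B ⊆ Φ A B := by
    refine Set.union_subset (hax.subset_sum A B hA hB) ?_
    rw [hax.comm A B hA hB]; exact hax.subset_sum B A hB hA
  have hvolU : volume (A ∪ B) = volume A + volume B :=
    measure_union hAB hB.1.measurableSet
  have hfin : volume (A ∪ B) ≠ ⊤ := ((hA.2.union hB.2).measure_lt_top).ne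
  have hdiff : volume (Φ A B \ (A ∪ B)) = 0 := by
    rw [measure_diff hUsub (hA.1.union hB.1).measurableSet.nullMeasurableSet hfin,
      hax.conserve A B hA hB, ← hvolU, tsub_self]
  refine subset_antisymm ?_ ?_
  · exact Set.subset_sUnion_of_mem ⟨(hbulky A B hA hB).1, hdiff⟩
  · refine (hbulky A B hA hB).2 _ (bulk_isOpen _) ?_
    rw [Set.symmDiff_def]
    refine measure_union_null ?_ ?_
    · exact measure_mono_null (Set.diff_subset_diff_right hUsub) (volume_bulk_diff _)
    · exact measure_mono_null
        (Set.diff_subset_diff_right (subset_bulk (hA.1.union hB.1))) hdiff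

/-- Let ⊕ be a sum of open sets in ℝ^d satisfying the six requirements
exactly and producing bulky sums. If b₀, …, b_{n+1} are pairwise disjoint bounded open
sets, then b₀ ⊕ ⋯ ⊕ b_{n+1} = bulk(b₀ ∪ ⋯ ∪ b_{n+1}). -/
theorem iterSum_of_disjoint_eq_bulk_union (d : ℕ)
    (Φ : Set (Pt d) → Set (Pt d) → Set (Pt d)) (hax : SumAxioms d Φ)
    (hbulky : ∀ A B, GoodSet A → GoodSet B → Bulky (Φ A B))
    (n : ℕ) (b : Fin (n + 2) → Set (Pt d))
    (hb : ∀ i, GoodSet (b i))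
    (hdisj : ∀ i j, i ≠ j → Disjoint (b i) (b j)) :
    iterSum Φ (n + 1) b = bulk (⋃ i, b i) := by
  induction n with
  | zero =>
    have : iterSum Φ 1 b = Φ (b 0) (b 1) := by
      simp [iterSum]
    rw [this, sum_eq_bulk hax hbulky (hb 0) (hb 1) (hdisj 0 1 (by decide))]
    have : (⋃ i, b i) = b 0 ∪ b 1 := by
      ext x
      simp [Fin.exists_fin_two]
    rw [this]
  | succ n ih =>
    have hUgood : GoodSet (⋃ i, b (Fin.castSucc i)) :=
      ⟨isOpen_iUnion fun i => (hb _).1, isBounded_iUnion.mpr fun i => (hb _).2⟩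
    have hih : iterSum Φ (n + 1) (fun i => b i.castSucc) = bulk (⋃ i, b (Fin.castSucc i)) :=
      ih (fun i => b i.castSucc) (fun i => hb _)
        (fun i j hij => hdisj _ _ (fun h => hij (Fin.castSucc_injective _ h)))
    have hlast : Disjoint (⋃ i, b (Fin.castSucc i)) (b (Fin.last (n + 2))) := by
      refine Set.disjoint_iUnion_left.mpr fun i => hdisj _ _ ?_
      exact Fin.castSucc_lt_last i |>.ne
    have hdisjbulk : Disjoint (bulk (⋃ i, b (Fin.castSucc i))) (b (Fin.last (n + 2))) := by
      rw [Set.disjoint_iff_inter_eq_empty]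
      refine open_null_empty ((bulk_isOpen _).inter (hb _).1) ?_
      refine measure_mono_null ?_ (volume_bulk_diff (⋃ i, b (Fin.castSucc i)))
      intro x hx
      exact ⟨hx.1, fun hxU => hlast.ne_of_mem hxU hx.2 rfl⟩
    have step : iterSum Φ (n + 2) b
        = Φ (bulk (⋃ i, b (Fin.castSucc i))) (b (Fin.last (n + 2))) := by
      show Φ (iterSum Φ (n + 1) fun i => b i.castSucc) (b (Fin.last (n + 2))) = _
      rw [hih]
    rw [step, sum_eq_bulk hax hbulky (goodSet_bulk hUgood) (hb _) hdisjbulk]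
    have hcup : (⋃ i, b i) = (⋃ i, b (Fin.castSucc i)) ∪ b (Fin.last (n + 2)) := by
      ext x
      simp only [Set.mem_iUnion, Set.mem_union]
      constructor
      · rintro ⟨i, hi⟩
        rcases Fin.eq_castSucc_or_eq_last i with ⟨j, rfl⟩ | rfl
        · exact Or.inl ⟨j, hi⟩
        · exact Or.inr hi
      · rintro (⟨j, hj⟩ | h)
        · exact ⟨_, hj⟩
        · exact ⟨_, h⟩
    rw [hcup]
    refine bulk_congr ?_ ?_
    · refine measure_mono_null ?_ (volume_bulk_diff (⋃ i, b (Fin.castSucc i)))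
      intro x hx
      rcases hx.1 with h | h
      · exact ⟨h, fun hxU => hx.2 (Or.inl hxU)⟩
      · exact absurd (Or.inr h) hx.2
    · refine measure_mono_null ?_ (measure_empty (μ := volume))
      intro x hx
      rcases hx.1 with h | h
      · exact absurd (Or.inl (subset_bulk hUgood.1 h)) hx.2
      · exact absurd (Or.inr h) hx.2
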